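/- Let C be a non-zero graded submodule of M. Then C is a graded strongly classical 2-absorbing second submodule of M if and only if for every r, s, t ∈ h(R), either r·s·t·C = r·s·C or r·s·t·C = s·t·C or r·s·t·C = r·t·C. -/

import Mathlib

open Pointwise

section GradedDefs

variable {G : Type*} [Group G] [DecidableEq G] {R : Type*} [CommRing R]
  {M : Type*} [AddCommGroup M] [Module R M]

/-- `R` is a `G`-graded commutative ring via the additive subgroups `𝒜 α`:
`R_α R_β ⊆ R_{αβ}` and `R = ⊕_{α ∈ G} R_α`. -/
structure IsRingGrading (𝒜 : G → AddSubgroup R) : Prop where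
  one_mem : (1 : R) ∈ 𝒜 1
  mul_mem : ∀ ⦃α β : G⦄ ⦃r s : R⦄, r ∈ 𝒜 α → s ∈ 𝒜 β → r * s ∈ 𝒜 (α * β)
  isInternal : DirectSum.IsInternal 𝒜

/-- `M` is a graded module over the `G`-graded ring `R`:
`R_α M_β ⊆ M_{αβ}` and `M = ⊕_{α ∈ G} M_α`. -/
structure IsModuleGrading (𝒜 : G → AddSubgroup R) (ℳ : G → AddSubgroup M) : Prop where
  smul_mem : ∀ ⦃α β : G⦄ ⦃r : R⦄ ⦃m : M⦄, r ∈ 𝒜 α → m ∈ ℳ β → r • m ∈ ℳ (α * β)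
  isInternal : DirectSum.IsInternal ℳ

/-- A submodule `N` of `M` is a graded submodule iff `N = ⊕_{α ∈ G} (N ∩ M_α)`,
equivalently, every element of `N` is a sum of homogeneous elements of `N`. -/
def IsGradedSubmodule (ℳ : G → AddSubgroup M) (N : Submodule R M) : Prop :=
  ∀ n ∈ N, n ∈ Submodule.span R {m : M | m ∈ N ∧ ∃ α, m ∈ ℳ α}

/-- An ideal `I` of `R` is a graded ideal iff `I = ⊕_{α ∈ G} (I ∩ R_α)`. -/
def IsGradedIdeal (𝒜 : G → AddSubgroup R) (I : Ideal R) : Prop :=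
  ∀ r ∈ I, r ∈ Ideal.span {s : R | s ∈ I ∧ ∃ α, s ∈ 𝒜 α}

/-- A proper graded submodule `C` of `M` is completely graded irreducible if whenever
`C = ⋂_{λ ∈ Δ} C_λ` for a family of graded submodules `C_λ`, then `C = C_β` for some `β`. -/
def CompletelyGradedIrreducible (ℳ : G → AddSubgroup M) (C : Submodule R M) : Prop :=
  IsGradedSubmodule ℳ C ∧ C ≠ ⊤ ∧
    ∀ S : Set (Submodule R M), (∀ D ∈ S, IsGradedSubmodule ℳ D) → C = sInf S → C ∈ S

/-- A non-zero graded submodule `C` of `M` is a graded classical 2-absorbing second submodule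
if whenever `r, s, t ∈ h(R)`, `U` is a completely graded irreducible submodule of `M` and
`r·s·t·C ⊆ U`, then `r·s·C ⊆ U` or `s·t·C ⊆ U` or `r·t·C ⊆ U`. -/
def IsGrClassical2AbsorbingSecond (𝒜 : G → AddSubgroup R) (ℳ : G → AddSubgroup M)
    (C : Submodule R M) : Prop :=
  C ≠ ⊥ ∧ IsGradedSubmodule ℳ C ∧
    ∀ r s t : R, (∃ α, r ∈ 𝒜 α) → (∃ β, s ∈ 𝒜 β) → (∃ γ, t ∈ 𝒜 γ) →
      ∀ U : Submodule R M, CompletelyGradedIrreducible ℳ U →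
        r • s • t • C ≤ U → (r • s • C ≤ U ∨ s • t • C ≤ U ∨ r • t • C ≤ U)

/-- A non-zero graded submodule `C` of `M` is a graded strongly classical 2-absorbing second
submodule if whenever `r, s, t ∈ h(R)`, `U₁, U₂, U₃` are completely graded irreducible
submodules of `M` and `r·s·t·C ⊆ U₁ ∩ U₂ ∩ U₃`, then `r·s·C ⊆ U₁ ∩ U₂ ∩ U₃` or
`s·t·C ⊆ U₁ ∩ U₂ ∩ U₃` or `r·t·C ⊆ U₁ ∩ U₂ ∩ U₃`. -/
def IsGrStronglyClassical2AbsorbingSecond (𝒜 : G → AddSubgroup R) (ℳ : G → AddSubgroup M)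
    (C : Submodule R M) : Prop :=
  C ≠ ⊥ ∧ IsGradedSubmodule ℳ C ∧
    ∀ r s t : R, (∃ α, r ∈ 𝒜 α) → (∃ β, s ∈ 𝒜 β) → (∃ γ, t ∈ 𝒜 γ) →
      ∀ U₁ U₂ U₃ : Submodule R M, CompletelyGradedIrreducible ℳ U₁ →
        CompletelyGradedIrreducible ℳ U₂ → CompletelyGradedIrreducible ℳ U₃ →
        r • s • t • C ≤ U₁ ⊓ U₂ ⊓ U₃ →
        (r • s • C ≤ U₁ ⊓ U₂ ⊓ U₃ ∨ s • t • C ≤ U₁ ⊓ U₂ ⊓ U₃ ∨ r • t • C ≤ U₁ ⊓ U₂ ⊓ U₃)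

/-- A non-zero graded submodule `S` of `M` is a graded weakly second submodule if whenever
`r, s ∈ h(R)`, `N` is a graded submodule of `M` and `r·s·S ⊆ N`, then `r·S ⊆ N` or `s·S ⊆ N`. -/
def IsGrWeaklySecond (𝒜 : G → AddSubgroup R) (ℳ : G → AddSubgroup M)
    (S : Submodule R M) : Prop :=
  S ≠ ⊥ ∧ IsGradedSubmodule ℳ S ∧
    ∀ r s : R, (∃ α, r ∈ 𝒜 α) → (∃ β, s ∈ 𝒜 β) →
      ∀ N : Submodule R M, IsGradedSubmodule ℳ N →
        r • s • S ≤ N → (r • S ≤ N ∨ s • S ≤ N)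

/-- A proper graded ideal `I` of `R` is a graded 2-absorbing ideal if whenever `r, s, t ∈ h(R)`
with `r·s·t ∈ I`, then `r·s ∈ I` or `r·t ∈ I` or `s·t ∈ I`. -/
def IsGr2AbsorbingIdeal (𝒜 : G → AddSubgroup R) (I : Ideal R) : Prop :=
  I ≠ ⊤ ∧ IsGradedIdeal 𝒜 I ∧
    ∀ r s t : R, (∃ α, r ∈ 𝒜 α) → (∃ β, s ∈ 𝒜 β) → (∃ γ, t ∈ 𝒜 γ) →
      r * s * t ∈ I → (r * s ∈ I ∨ r * t ∈ I ∨ s * t ∈ I)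

end GradedDefs

/-!
If `r·s·t·C` were strictly smaller than each of `r·s·C`, `s·t·C`, `r·t·C`, pick elements `x₁, x₂, x₃`
of these three submodules outside `r·s·t·C`. Since `r·s·t·C` is graded, Zorn's lemma gives, for
each `xᵢ`, a graded submodule `Uᵢ ⊇ r·s·t·C` maximal with `xᵢ ∉ Uᵢ`, and such a maximal `Uᵢ` is
completely graded irreducible. The strongly classical 2-absorbing property applied to
`U₁ ∩ U₂ ∩ U₃` then puts one of the `xᵢ` into `Uᵢ`. The converse is immediate.
-/

section GradedSubmodule

variable {G : Type*} {R : Type*} [CommRing R] {M : Type*} [AddCommGroup M] [Module R M]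
  {ℳ : G → AddSubgroup M}

theorem isGradedSubmodule_iff_le_span {N : Submodule R M} :
    IsGradedSubmodule ℳ N ↔ N ≤ Submodule.span R {m : M | m ∈ N ∧ ∃ α, m ∈ ℳ α} :=
  Iff.rfl

theorem IsGradedSubmodule.sSup {S : Set (Submodule R M)}
    (hS : ∀ D ∈ S, IsGradedSubmodule ℳ D) : IsGradedSubmodule ℳ (sSup S) := by
  refine isGradedSubmodule_iff_le_span.mpr (sSup_le fun D hD => ?_)
  exact (isGradedSubmodule_iff_le_span.mp (hS D hD)).trans
    (Submodule.span_mono fun m ⟨hmD, hm⟩ => ⟨le_sSup hD hmD, hm⟩)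

theorem IsGradedSubmodule.smul [Group G] [DecidableEq G] {𝒜 : G → AddSubgroup R}
    (hℳ : IsModuleGrading 𝒜 ℳ) {r : R} (hr : ∃ α, r ∈ 𝒜 α) {N : Submodule R M}
    (hN : IsGradedSubmodule ℳ N) : IsGradedSubmodule ℳ (r • N) := by
  obtain ⟨α, hrα⟩ := hr
  calc r • N
      ≤ r • Submodule.span R {m : M | m ∈ N ∧ ∃ β, m ∈ ℳ β} := smul_le_smul_left r hN
    _ = Submodule.span R (r • {m : M | m ∈ N ∧ ∃ β, m ∈ ℳ β}) := Submodule.smul_span r _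
    _ ≤ Submodule.span R {m : M | m ∈ r • N ∧ ∃ β, m ∈ ℳ β} := by
      refine Submodule.span_mono ?_
      rintro _ ⟨m, ⟨hmN, β, hmβ⟩, rfl⟩
      exact ⟨Submodule.smul_mem_pointwise_smul m r N hmN, α * β, hℳ.smul_mem hrα hmβ⟩

theorem completelyGradedIrreducible_of_maximal {U : Submodule R M} {x : M}
    (hU : Maximal (fun D : Submodule R M => IsGradedSubmodule ℳ D ∧ x ∉ D) U) :
    CompletelyGradedIrreducible ℳ U := by
  obtain ⟨⟨hUgr, hxU⟩, hUmax⟩ := hU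
  refine ⟨hUgr, fun hU => hxU (hU ▸ Submodule.mem_top), fun S hSgr hUS => ?_⟩
  by_contra hUS'
  refine hxU (hUS ▸ Submodule.mem_sInf.mpr fun D hD => ?_)
  by_contra hxD
  have hUD : U ≤ D := hUS ▸ sInf_le hD
  exact hUS' (le_antisymm (hUmax ⟨hSgr D hD, hxD⟩ hUD) hUD ▸ hD)

theorem exists_completelyGradedIrreducible_of_not_le {N P : Submodule R M}
    (hN : IsGradedSubmodule ℳ N) (hPN : ¬ P ≤ N) :
    ∃ U : Submodule R M, CompletelyGradedIrreducible ℳ U ∧ N ≤ U ∧ ¬ P ≤ U := by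
  obtain ⟨x, hxP, hxN⟩ := SetLike.not_le_iff_exists.mp hPN
  obtain ⟨U, hNU, hU⟩ := zorn_le_nonempty₀ {D | IsGradedSubmodule ℳ D ∧ x ∉ D}
    (fun c hc hchain D hD => by
      refine ⟨sSup c, ⟨.sSup fun E hE => (hc hE).1, fun hxc => ?_⟩, fun E => le_sSup⟩
      obtain ⟨E, hE, hxE⟩ := (Submodule.mem_sSup_of_directed ⟨D, hD⟩ hchain.directedOn).mp hxc
      exact (hc hE).2 hxE)
    N ⟨hN, hxN⟩
  exact ⟨U, completelyGradedIrreducible_of_maximal hU, hNU, fun hPU => hU.prop.2 (hPU hxP)⟩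

end GradedSubmodule

theorem stmt9_general {G : Type*} [Group G] [DecidableEq G] {R : Type*} [CommRing R]
    {M : Type*} [AddCommGroup M] [Module R M]
    (𝒜 : G → AddSubgroup R) (ℳ : G → AddSubgroup M)
    (hℳ : IsModuleGrading 𝒜 ℳ)
    (C : Submodule R M) (hC0 : C ≠ ⊥) (hCgr : IsGradedSubmodule ℳ C) :
    IsGrStronglyClassical2AbsorbingSecond 𝒜 ℳ C ↔
      ∀ r s t : R, (∃ α, r ∈ 𝒜 α) → (∃ β, s ∈ 𝒜 β) → (∃ γ, t ∈ 𝒜 γ) →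
        (r • s • t • C = r • s • C ∨ r • s • t • C = s • t • C ∨
          r • s • t • C = r • t • C) := by
  refine ⟨fun ⟨_, _, habs⟩ r s t hr hs ht => ?_, fun h => ⟨hC0, hCgr, ?_⟩⟩
  · have hgr : IsGradedSubmodule ℳ (r • s • t • C) :=
      ((hCgr.smul hℳ ht).smul hℳ hs).smul hℳ hr
    have hrs : r • s • t • C ≤ r • s • C := by gcongr; exact Submodule.smul_le_self_of_tower t C
    have hst : r • s • t • C ≤ s • t • C := by
      rw [smul_comm r s, smul_comm r t]; gcongr; exact Submodule.smul_le_self_of_tower r C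
    have hrt : r • s • t • C ≤ r • t • C := by
      rw [smul_comm s t]; gcongr; exact Submodule.smul_le_self_of_tower s C
    by_contra! ⟨hne₁, hne₂, hne₃⟩
    obtain ⟨U₁, hU₁, hle₁, hnle₁⟩ :=
      exists_completelyGradedIrreducible_of_not_le hgr fun h => hne₁ (hrs.antisymm h)
    obtain ⟨U₂, hU₂, hle₂, hnle₂⟩ :=
      exists_completelyGradedIrreducible_of_not_le hgr fun h => hne₂ (hst.antisymm h)
    obtain ⟨U₃, hU₃, hle₃, hnle₃⟩ :=
      exists_completelyGradedIrreducible_of_not_le hgr fun h => hne₃ (hrt.antisymm h)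
    rcases habs r s t hr hs ht U₁ U₂ U₃ hU₁ hU₂ hU₃ (le_inf (le_inf hle₁ hle₂) hle₃) with h | h | h
    · exact hnle₁ (h.trans (inf_le_left.trans inf_le_left))
    · exact hnle₂ (h.trans (inf_le_left.trans inf_le_right))
    · exact hnle₃ (h.trans inf_le_right)
  · intro r s t hr hs ht U₁ U₂ U₃ _ _ _ hle
    rcases h r s t hr hs ht with heq | heq | heq <;> rw [heq] at hle <;>
      simp only [hle, true_or, or_true]

theorem stmt9 {G : Type*} [Group G] [DecidableEq G] {R : Type*} [CommRing R]
    {M : Type*} [AddCommGroup M] [Module R M]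
    (𝒜 : G → AddSubgroup R) (ℳ : G → AddSubgroup M)
    (h𝒜 : IsRingGrading 𝒜) (hℳ : IsModuleGrading 𝒜 ℳ)
    (C : Submodule R M) (hC0 : C ≠ ⊥) (hCgr : IsGradedSubmodule ℳ C) :
    IsGrStronglyClassical2AbsorbingSecond 𝒜 ℳ C ↔
      ∀ r s t : R, (∃ α, r ∈ 𝒜 α) → (∃ β, s ∈ 𝒜 β) → (∃ γ, t ∈ 𝒜 γ) →
        (r • s • t • C = r • s • C ∨ r • s • t • C = s • t • C ∨
          r • s • t • C = r • t • C) :=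
  stmt9_general 𝒜 ℳ hℳ C hC0 hCgr
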